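/- arXiv:2404.03346 — 5 statements merged into one kernel-verified Lean document; each statement's English description precedes it below -/
import Mathlib

section
/- For real numbers m and s with 0 < m + 1 and 0 < s - m - 1, the integral ∫₀^∞ (log t) · t^m / (1+t)^s dt equals B(s - m - 1, m + 1) · (Ψ(m+1) - Ψ(s - m - 1)), where Ψ is the digamma function. -/
open MeasureTheory Set

/-- The Beta function `B(a,b) = ∫₀¹ x^(a-1) (1-x)^(b-1) dx`. -/
noncomputable def Beta (a b : ℝ) : ℝ := ∫ x in Ioo (0:ℝ) 1, x ^ (a-1) * (1-x) ^ (b-1)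

/-- The digamma function, the logarithmic derivative of the Gamma function. -/
noncomputable def digamma (x : ℝ) : ℝ := deriv (fun y => Real.log (Real.Gamma y)) x

/-!
Put `a = m + 1`, `b = s - m - 1`. The substitution `t = x / (1 - x)` turns the integral into
`∫₀¹ (log x - log (1 - x)) x^(a-1) (1-x)^(b-1) dx`. The `log x` part is `∂B(a,b)/∂a`
(differentiation under the integral sign), which `B(a,b) = Γ(a)Γ(b)/Γ(a+b)` evaluates to
`B(a,b) (Ψ(a) - Ψ(a+b))`; the `log (1 - x)` part is the same with `a` and `b` swapped, by the
symmetry `x ↦ 1 - x`, and the `Ψ(a+b)` terms cancel.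
-/

open Real

lemma setIntegral_Ioo_zero_one_comp_one_sub (g : ℝ → ℝ) :
    ∫ x in Ioo (0:ℝ) 1, g (1 - x) = ∫ x in Ioo (0:ℝ) 1, g x := by
  have h := intervalIntegral.integral_comp_sub_left g (a := 0) (b := 1) 1
  rwa [sub_self, sub_zero, intervalIntegral.integral_of_le zero_le_one,
    intervalIntegral.integral_of_le zero_le_one, integral_Ioc_eq_integral_Ioo,
    integral_Ioc_eq_integral_Ioo] at h

lemma integrableOn_Ioo_zero_one_comp_one_sub {g : ℝ → ℝ} (hg : IntegrableOn g (Ioo 0 1)) :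
    IntegrableOn (fun x => g (1 - x)) (Ioo 0 1) := by
  rw [← integrableOn_Ioc_iff_integrableOn_Ioo, ← intervalIntegrable_iff_integrableOn_Ioc_of_le
    zero_le_one] at hg ⊢
  simpa using (hg.comp_sub_left 1).symm

lemma Beta_comm (a b : ℝ) : Beta a b = Beta b a := by
  rw [Beta, Beta, ← setIntegral_Ioo_zero_one_comp_one_sub]
  simp only [sub_sub_cancel, mul_comm]

lemma ofReal_cpow_mul_one_sub_cpow {x : ℝ} (hx : x ∈ Ioo (0:ℝ) 1) (a b : ℝ) :
    (x : ℂ) ^ ((a : ℂ) - 1) * (1 - (x : ℂ)) ^ ((b : ℂ) - 1) =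
      ((x ^ (a - 1) * (1 - x) ^ (b - 1) : ℝ) : ℂ) := by
  rw [Complex.ofReal_mul, Complex.ofReal_cpow hx.1.le, Complex.ofReal_cpow (sub_pos.2 hx.2).le]
  push_cast
  rfl

lemma integrableOn_rpow_mul_one_sub_rpow {a b : ℝ} (ha : 0 < a) (hb : 0 < b) :
    IntegrableOn (fun x : ℝ => x ^ (a - 1) * (1 - x) ^ (b - 1)) (Ioo 0 1) := by
  have h := Complex.betaIntegral_convergent (u := a) (v := b) (by simpa) (by simpa)
  rw [intervalIntegrable_iff_integrableOn_Ioo_of_le zero_le_one] at h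
  refine IntegrableOn.congr_fun h.re (fun x hx => ?_) measurableSet_Ioo
  simp only [ofReal_cpow_mul_one_sub_cpow hx]
  exact Complex.ofReal_re _

lemma Beta_eq_Gamma_mul_Gamma_div {a b : ℝ} (ha : 0 < a) (hb : 0 < b) :
    Beta a b = Gamma a * Gamma b / Gamma (a + b) := by
  have h := Complex.Gamma_mul_Gamma_eq_betaIntegral (s := a) (t := b) (by simpa) (by simpa)
  rw [Complex.betaIntegral, intervalIntegral.integral_of_le zero_le_one,
    integral_Ioc_eq_integral_Ioo, setIntegral_congr_fun measurableSet_Ioo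
      (fun x hx => ofReal_cpow_mul_one_sub_cpow hx a b), integral_complex_ofReal,
    ← Complex.ofReal_add, Complex.Gamma_ofReal, Complex.Gamma_ofReal, Complex.Gamma_ofReal] at h
  rw [eq_div_iff (Gamma_pos_of_pos (add_pos ha hb)).ne', mul_comm, Beta]
  exact_mod_cast h.symm

lemma abs_log_mul_rpow_le {x t : ℝ} (hx₀ : 0 < x) (hx₁ : x ≤ 1) (ht : 0 < t) (c : ℝ) :
    |log x * x ^ c| ≤ x ^ (c - t) / t := by
  have h := abs_log_mul_self_rpow_lt x t hx₀ hx₁ ht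
  rw [show c = t + (c - t) by ring, rpow_add hx₀, ← mul_assoc, abs_mul,
    abs_of_pos (rpow_pos_of_pos hx₀ _), add_sub_cancel_left, div_eq_mul_one_div,
    mul_comm _ (1 / t)]
  exact mul_le_mul_of_nonneg_right h.le (rpow_pos_of_pos hx₀ _).le

lemma integrableOn_log_mul_rpow_mul_one_sub_rpow {a b : ℝ} (ha : 0 < a) (hb : 0 < b) :
    IntegrableOn (fun x : ℝ => log x * (x ^ (a - 1) * (1 - x) ^ (b - 1))) (Ioo 0 1) := by
  refine Integrable.mono' ((integrableOn_rpow_mul_one_sub_rpow (half_pos ha) hb).div_const (a / 2))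
    (by fun_prop : Measurable _).aestronglyMeasurable
    ((ae_restrict_iff' measurableSet_Ioo).2 (.of_forall fun x hx => ?_))
  have h := abs_log_mul_rpow_le hx.1 hx.2.le (half_pos ha) (a - 1)
  rw [show a - 1 - a / 2 = a / 2 - 1 by ring] at h
  have h₁ : 0 ≤ (1 - x) ^ (b - 1) := rpow_nonneg (sub_pos.2 hx.2).le _
  rw [norm_eq_abs, ← mul_assoc, abs_mul, abs_of_nonneg h₁, mul_div_right_comm]
  exact mul_le_mul_of_nonneg_right h h₁

lemma hasDerivAt_Beta_left_integral {a b : ℝ} (ha : 0 < a) (hb : 0 < b) :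
    HasDerivAt (fun c => Beta c b)
      (∫ x in Ioo (0:ℝ) 1, log x * (x ^ (a - 1) * (1 - x) ^ (b - 1))) a := by
  have h_bound : ∀ᵐ x ∂volume.restrict (Ioo (0:ℝ) 1), ∀ c ∈ Metric.ball a (a / 2),
      ‖log x * (x ^ (c - 1) * (1 - x) ^ (b - 1))‖ ≤
        ‖log x * (x ^ (a / 2 - 1) * (1 - x) ^ (b - 1))‖ := by
    refine (ae_restrict_iff' measurableSet_Ioo).2 (.of_forall fun x hx c hc => ?_)
    have hc : a / 2 ≤ c := by
      rw [Metric.mem_ball, dist_eq, abs_lt] at hc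
      linarith
    have h₁ : 0 ≤ (1 - x) ^ (b - 1) := rpow_nonneg (sub_pos.2 hx.2).le _
    simp only [norm_mul, norm_eq_abs, abs_of_nonneg h₁, abs_of_pos (rpow_pos_of_pos hx.1 _)]
    gcongr ?_ * (?_ * _)
    exact rpow_le_rpow_of_exponent_ge hx.1 hx.2.le (by linarith)
  have h_diff : ∀ᵐ x ∂volume.restrict (Ioo (0:ℝ) 1), ∀ c ∈ Metric.ball a (a / 2),
      HasDerivAt (fun c => x ^ (c - 1) * (1 - x) ^ (b - 1))
        (log x * (x ^ (c - 1) * (1 - x) ^ (b - 1))) c := by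
    refine (ae_restrict_iff' measurableSet_Ioo).2 (.of_forall fun x hx c _ => ?_)
    exact ((((hasDerivAt_id c).sub_const 1).const_rpow hx.1).mul_const _).congr_deriv
      (by simp only [id, mul_one, mul_assoc])
  exact (hasDerivAt_integral_of_dominated_loc_of_deriv_le (μ := volume.restrict (Ioo (0:ℝ) 1))
    (F := fun c x => x ^ (c - 1) * (1 - x) ^ (b - 1))
    (Metric.ball_mem_nhds a (half_pos ha))
    (.of_forall fun c => (by fun_prop : Measurable _).aestronglyMeasurable)
    (integrableOn_rpow_mul_one_sub_rpow ha hb)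
    (by fun_prop : Measurable _).aestronglyMeasurable h_bound
    (integrableOn_log_mul_rpow_mul_one_sub_rpow (half_pos ha) hb).norm h_diff).2

lemma hasDerivAt_Gamma_of_pos {x : ℝ} (hx : 0 < x) :
    HasDerivAt Gamma (Gamma x * digamma x) x := by
  have hΓ := (differentiableOn_Gamma_Ioi.differentiableAt (Ioi_mem_nhds hx)).hasDerivAt
  have hψ : digamma x = deriv Gamma x / Gamma x := (hΓ.log (Gamma_pos_of_pos hx).ne').deriv
  rwa [hψ, mul_div_cancel₀ _ (Gamma_pos_of_pos hx).ne']

lemma hasDerivAt_Beta_left_digamma {a b : ℝ} (ha : 0 < a) (hb : 0 < b) :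
    HasDerivAt (fun c => Beta c b) (Beta a b * (digamma a - digamma (a + b))) a := by
  have hΓ := ((hasDerivAt_Gamma_of_pos ha).mul_const (Gamma b)).div
    ((hasDerivAt_Gamma_of_pos (add_pos ha hb)).comp_add_const a b)
    (Gamma_pos_of_pos (add_pos ha hb)).ne'
  have hBeta : (fun c => Beta c b) =ᶠ[nhds a] fun c => Gamma c * Gamma b / Gamma (c + b) :=
    Filter.eventually_of_mem (Ioi_mem_nhds ha) fun c hc => Beta_eq_Gamma_mul_Gamma_div hc hb
  refine (hΓ.congr_of_eventuallyEq hBeta).congr_deriv ?_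
  rw [Beta_eq_Gamma_mul_Gamma_div ha hb]
  field_simp

lemma integral_log_mul_rpow_mul_one_sub_rpow {a b : ℝ} (ha : 0 < a) (hb : 0 < b) :
    ∫ x in Ioo (0:ℝ) 1, log x * (x ^ (a - 1) * (1 - x) ^ (b - 1)) =
      Beta a b * (digamma a - digamma (a + b)) :=
  (hasDerivAt_Beta_left_integral ha hb).unique (hasDerivAt_Beta_left_digamma ha hb)

lemma image_div_one_sub_Ioo : (fun x : ℝ => x / (1 - x)) '' Ioo 0 1 = Ioi 0 := by
  ext t
  simp only [mem_image, mem_Ioo, mem_Ioi]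
  constructor
  · rintro ⟨x, ⟨hx₀, hx₁⟩, rfl⟩
    exact div_pos hx₀ (sub_pos.2 hx₁)
  · intro ht
    refine ⟨t / (1 + t), ⟨by positivity, (div_lt_one (by linarith)).2 (by linarith)⟩, ?_⟩
    field_simp
    ring

lemma integral_Ioi_eq_integral_Ioo_div_one_sub (g : ℝ → ℝ) :
    ∫ t in Ioi (0:ℝ), g t = ∫ x in Ioo (0:ℝ) 1, ((1 - x) ^ 2)⁻¹ * g (x / (1 - x)) := by
  have hderiv : ∀ x ∈ Ioo (0:ℝ) 1,
      HasDerivWithinAt (fun x : ℝ => x / (1 - x)) ((1 - x) ^ 2)⁻¹ (Ioo 0 1) x := by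
    intro x hx
    have h := (hasDerivAt_id x).div ((hasDerivAt_id x).const_sub 1) (sub_pos.2 hx.2).ne'
    refine h.hasDerivWithinAt.congr_deriv ?_
    simp only [id, one_mul, mul_neg, mul_one, sub_neg_eq_add, sub_add_cancel, one_div]
  have hinj : InjOn (fun x : ℝ => x / (1 - x)) (Ioo 0 1) := by
    intro x hx y hy h
    rw [div_eq_div_iff (sub_pos.2 hx.2).ne' (sub_pos.2 hy.2).ne'] at h
    linarith
  rw [← image_div_one_sub_Ioo,
    integral_image_eq_integral_abs_deriv_smul measurableSet_Ioo hderiv hinj]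
  refine setIntegral_congr_fun measurableSet_Ioo fun x hx => ?_
  rw [smul_eq_mul, abs_of_pos (by have := sub_pos.2 hx.2; positivity)]

lemma inv_sq_one_sub_mul_log_div_one_sub {a b x : ℝ} (hx : x ∈ Ioo (0:ℝ) 1) :
    ((1 - x) ^ 2)⁻¹ * (log (x / (1 - x)) * (x / (1 - x)) ^ (a - 1) / (1 + x / (1 - x)) ^ (a + b))
      = log x * (x ^ (a - 1) * (1 - x) ^ (b - 1)) -
        log (1 - x) * (x ^ (a - 1) * (1 - x) ^ (b - 1)) := by
  have hy : 0 < 1 - x := sub_pos.2 hx.2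
  have h_one_add : 1 + x / (1 - x) = (1 - x)⁻¹ := by field_simp; ring
  have h_exp : (1 - x) ^ (a + b) = (1 - x) ^ (a - 1) * (1 - x) ^ 2 * (1 - x) ^ (b - 1) := by
    rw [← rpow_natCast, ← rpow_add hy, ← rpow_add hy]
    congr 1
    push_cast
    ring
  rw [h_one_add, inv_rpow hy.le, div_rpow hx.1.le hy.le, log_div hx.1.ne' hy.ne', h_exp]
  have := rpow_pos_of_pos hy (a - 1)
  have := rpow_pos_of_pos hy (b - 1)
  field_simp

lemma integrableOn_log_one_sub_mul_rpow_mul_one_sub_rpow {a b : ℝ} (ha : 0 < a) (hb : 0 < b) :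
    IntegrableOn (fun x : ℝ => log (1 - x) * (x ^ (a - 1) * (1 - x) ^ (b - 1))) (Ioo 0 1) := by
  convert integrableOn_Ioo_zero_one_comp_one_sub
    (integrableOn_log_mul_rpow_mul_one_sub_rpow hb ha) using 3
  rw [sub_sub_cancel, mul_comm]

lemma integral_log_one_sub_mul_rpow_mul_one_sub_rpow {a b : ℝ} (ha : 0 < a) (hb : 0 < b) :
    ∫ x in Ioo (0:ℝ) 1, log (1 - x) * (x ^ (a - 1) * (1 - x) ^ (b - 1)) =
      Beta a b * (digamma b - digamma (a + b)) := by
  rw [Beta_comm, add_comm, ← integral_log_mul_rpow_mul_one_sub_rpow hb ha,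
    ← setIntegral_Ioo_zero_one_comp_one_sub]
  congr 1 with x
  rw [sub_sub_cancel]
  ring

lemma integral_log_mul_rpow_div_one_add_rpow {a b : ℝ} (ha : 0 < a) (hb : 0 < b) :
    ∫ t in Ioi (0:ℝ), log t * t ^ (a - 1) / (1 + t) ^ (a + b) =
      Beta a b * (digamma a - digamma b) := by
  rw [integral_Ioi_eq_integral_Ioo_div_one_sub, setIntegral_congr_fun measurableSet_Ioo
      fun x hx => inv_sq_one_sub_mul_log_div_one_sub hx,
    integral_sub (integrableOn_log_mul_rpow_mul_one_sub_rpow ha hb)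
      (integrableOn_log_one_sub_mul_rpow_mul_one_sub_rpow ha hb),
    integral_log_mul_rpow_mul_one_sub_rpow ha hb,
    integral_log_one_sub_mul_rpow_mul_one_sub_rpow ha hb]
  ring

theorem log_beta_integral (m s : ℝ) (hm : 0 < m + 1) (hs : 0 < s - m - 1) :
    (∫ t in Ioi (0:ℝ), Real.log t * t ^ m / (1 + t) ^ s)
      = Beta (s - m - 1) (m + 1) * (digamma (m + 1) - digamma (s - m - 1)) := by
  have h := integral_log_mul_rpow_div_one_add_rpow hm hs
  rw [add_sub_cancel_right, show m + 1 + (s - m - 1) = s by ring] at h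
  rw [h, Beta_comm]
end

section
/- Let f^{(i)}_{α,β}(y) = c(i,n) β (y/α)^{iβ-1} / (α(1+(y/α)^β)^{n+1}) for y > 0, with c(i,n) = n!/((n-i)!(i-1)!), α, β > 0, 1 ≤ i ≤ n, and τ > 0. If iβτ + iβ - τ > 0, then ∫₀^∞ (f^{(i)}_{α,β}(y))^{τ+1} dy = c(i,n)^{τ+1} (β/α)^τ · B( ((n-i+1)τβ + (n-i+1)β + τ)/β , (iβτ + iβ - τ)/β ). -/
open MeasureTheory Set

/-- `c(i,n) = n! / ((n-i)! (i-1)!)`. -/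
noncomputable def cCoef (i n : ℕ) : ℝ :=
  (Nat.factorial n : ℝ) / ((Nat.factorial (n - i) : ℝ) * (Nat.factorial (i - 1) : ℝ))

/-- The density of the `i`-th order statistic of a log-logistic sample of size `n`. -/
noncomputable def fOrd (α β : ℝ) (n i : ℕ) (y : ℝ) : ℝ :=
  cCoef i n * β * (y/α) ^ ((i : ℝ) * β - 1) / (α * (1 + (y/α) ^ β) ^ (n + 1))

/-!
After factoring out the constants, `f^{(i)}_{α,β}(y)^{τ+1}` is a constant multiple of
`u^m (1 + u^β)^{-p}`, where `u = y/α`, `m = (iβ - 1)(τ + 1)` and `p = (n + 1)(τ + 1) = a + b`. Substituting `y = α u` and then `u = t^{1/β}` turns its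
integral over `(0, ∞)` into the Beta integral of the second kind `∫₀^∞ t^{a-1} (1+t)^{-(a+b)} dt`,
and `t = x⁻¹ - 1` maps that onto `B(b, a)`.
-/

open Real

lemma integral_Ioi_comp_div {E : Type*} [NormedAddCommGroup E] [NormedSpace ℝ E]
    (g : ℝ → E) {α : ℝ} (hα : 0 < α) :
    ∫ y in Ioi (0:ℝ), g (y / α) = α • ∫ u in Ioi (0:ℝ), g u := by
  simp_rw [div_eq_inv_mul]
  rw [integral_comp_mul_left_Ioi g 0 (inv_pos.mpr hα), mul_zero, inv_inv]

lemma integral_Ioi_rpow_mul_comp_rpow {E : Type*} [NormedAddCommGroup E] [NormedSpace ℝ E]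
    (g : ℝ → E) (m : ℝ) {β : ℝ} (hβ : 0 < β) :
    ∫ x in Ioi (0:ℝ), x ^ m • g (x ^ β) = β⁻¹ • ∫ u in Ioi (0:ℝ), u ^ ((m + 1) / β - 1) • g u := by
  rw [← integral_comp_rpow_Ioi_of_pos (g := fun u => u ^ ((m + 1) / β - 1) • g u) hβ,
    ← integral_smul]
  refine setIntegral_congr_fun measurableSet_Ioi fun x (hx : 0 < x) => ?_
  rw [smul_smul, smul_smul, ← rpow_mul hx.le, ← mul_assoc, inv_mul_cancel₀ hβ.ne', one_mul,
    ← rpow_add hx]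
  congr 2
  field_simp
  ring

lemma integral_Ioi_rpow_mul_one_add_rpow_neg (a b : ℝ) :
    ∫ t in Ioi (0:ℝ), t ^ (a - 1) * (1 + t) ^ (-(a + b)) = Beta b a := by
  have himage : (fun x : ℝ => x⁻¹ - 1) '' Ioo 0 1 = Ioi 0 := by
    ext t
    refine ⟨?_, fun (ht : 0 < t) =>
      ⟨(1 + t)⁻¹, ⟨by positivity, inv_lt_one_of_one_lt₀ (by linarith)⟩, by simp⟩⟩
    rintro ⟨x, ⟨hx0, hx1⟩, rfl⟩
    exact sub_pos.mpr ((one_lt_inv₀ hx0).mpr hx1)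
  have hderiv : ∀ x ∈ Ioo (0:ℝ) 1,
      HasDerivWithinAt (fun x : ℝ => x⁻¹ - 1) (-(x ^ 2)⁻¹) (Ioo 0 1) x :=
    fun x hx => ((hasDerivAt_inv hx.1.ne').sub_const 1).hasDerivWithinAt
  have hinj : InjOn (fun x : ℝ => x⁻¹ - 1) (Ioo 0 1) :=
    fun x _ y _ hxy => inv_injective (sub_left_injective hxy)
  rw [← himage, integral_image_eq_integral_abs_deriv_smul measurableSet_Ioo hderiv hinj, Beta]
  refine setIntegral_congr_fun measurableSet_Ioo fun x ⟨hx0, hx1⟩ => ?_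
  have h1x : 0 < 1 - x := sub_pos.mpr hx1
  have hsub : x⁻¹ - 1 = (1 - x) * x⁻¹ := by field_simp
  rw [smul_eq_mul, abs_neg, abs_inv, abs_of_pos (by positivity), add_sub_cancel, hsub,
    mul_rpow h1x.le (inv_nonneg.mpr hx0.le), inv_rpow hx0.le, inv_rpow hx0.le, ← rpow_neg hx0.le,
    ← rpow_neg hx0.le, neg_neg, ← rpow_two, ← rpow_neg hx0.le]
  calc x ^ (-2 : ℝ) * ((1 - x) ^ (a - 1) * x ^ (-(a - 1)) * x ^ (a + b))
      = (x ^ (-2 : ℝ) * x ^ (-(a - 1)) * x ^ (a + b)) * (1 - x) ^ (a - 1) := by ring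
    _ = x ^ (b - 1) * (1 - x) ^ (a - 1) := by
      rw [← rpow_add hx0, ← rpow_add hx0]
      ring_nf

lemma fOrd_rpow {α β : ℝ} (hα : 0 < α) (hβ : 0 < β) (n i : ℕ) (s : ℝ) {y : ℝ} (hy : 0 < y) :
    fOrd α β n i y ^ s = cCoef i n ^ s * (β / α) ^ s *
      ((y / α) ^ (((i : ℝ) * β - 1) * s) * (1 + (y / α) ^ β) ^ (-((n + 1) * s))) := by
  have hu : 0 < y / α := div_pos hy hα
  have hc : 0 ≤ cCoef i n := by unfold cCoef; positivity
  have h1u : 0 < 1 + (y / α) ^ β := by positivity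
  have hf : fOrd α β n i y = cCoef i n * (β / α) *
      ((y / α) ^ ((i : ℝ) * β - 1) * (1 + (y / α) ^ β) ^ (-((n : ℝ) + 1))) := by
    rw [fOrd, rpow_neg h1u.le, ← Nat.cast_add_one, rpow_natCast]
    field_simp
  rw [hf, mul_rpow (by positivity) (by positivity), mul_rpow (by positivity) (by positivity),
    mul_rpow (by positivity) (by positivity), ← rpow_mul hu.le, ← rpow_mul h1u.le, neg_mul]

theorem integral_fOrd_rpow_general (α β τ : ℝ) (hα : 0 < α) (hβ : 0 < β)
    (n i : ℕ) :
    (∫ y in Ioi (0:ℝ), (fOrd α β n i y) ^ (τ + 1))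
      = cCoef i n ^ (τ + 1) * (β/α) ^ τ *
        Beta ((((n : ℝ) - i + 1) * τ * β + ((n : ℝ) - i + 1) * β + τ) / β)
             (((i : ℝ) * β * τ + i * β - τ) / β) := by
  set a : ℝ := ((i : ℝ) * β * τ + i * β - τ) / β
  set b : ℝ := (((n : ℝ) - i + 1) * τ * β + ((n : ℝ) - i + 1) * β + τ) / β
  set m : ℝ := ((i : ℝ) * β - 1) * (τ + 1)
  have hm : (m + 1) / β - 1 = a - 1 := by simp only [m, a]; field_simp; ring
  have hab : ((n : ℝ) + 1) * (τ + 1) = a + b := by simp only [a, b]; field_simp; ring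
  calc (∫ y in Ioi (0:ℝ), (fOrd α β n i y) ^ (τ + 1))
      = ∫ y in Ioi (0:ℝ), cCoef i n ^ (τ + 1) * (β / α) ^ (τ + 1) *
          ((y / α) ^ m * (1 + (y / α) ^ β) ^ (-(a + b))) :=
        setIntegral_congr_fun measurableSet_Ioi fun y hy => by
          rw [fOrd_rpow hα hβ n i (τ + 1) hy, hab]
    _ = cCoef i n ^ (τ + 1) * (β / α) ^ (τ + 1) * (α * (β⁻¹ *
          ∫ u in Ioi (0:ℝ), u ^ ((m + 1) / β - 1) * (1 + u) ^ (-(a + b)))) := by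
        rw [integral_const_mul,
          integral_Ioi_comp_div (fun u => u ^ m * (1 + u ^ β) ^ (-(a + b))) hα]
        congr 2
        exact integral_Ioi_rpow_mul_comp_rpow (fun u => (1 + u) ^ (-(a + b))) m hβ
    _ = cCoef i n ^ (τ + 1) * (β / α) ^ τ * Beta b a := by
        rw [hm, integral_Ioi_rpow_mul_one_add_rpow_neg, rpow_add_one (div_pos hβ hα).ne' τ]
        field_simp

theorem integral_fOrd_rpow (α β τ : ℝ) (hα : 0 < α) (hβ : 0 < β) (hτ : 0 < τ)
    (n i : ℕ) (hi1 : 1 ≤ i) (hin : i ≤ n)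
    (hpos : 0 < (i : ℝ) * β * τ + i * β - τ) :
    (∫ y in Ioi (0:ℝ), (fOrd α β n i y) ^ (τ + 1))
      = cCoef i n ^ (τ + 1) * (β/α) ^ τ *
        Beta ((((n : ℝ) - i + 1) * τ * β + ((n : ℝ) - i + 1) * β + τ) / β)
             (((i : ℝ) * β * τ + i * β - τ) / β) :=
  integral_fOrd_rpow_general α β τ hα hβ n i
end

section
/- For the log-logistic density f_{α,β}(x) = β α^β x^{β-1}/(x^β+α^β)² (x > 0, α, β > 0), the Fisher information with respect to the scale parameter α equals β²/(3α²), i.e., ∫₀^∞ (∂ log f_{α,β}(x)/∂α)² f_{α,β}(x) dx = β²/(3α²). -/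
open MeasureTheory Set Filter Topology

/-- The Fisher information of the log-logistic distribution with respect to the scale
parameter `α` equals `β²/(3α²)`. -/
theorem logLogistic_fisher_info_scale (α β : ℝ) (hα : 0 < α) (hβ : 0 < β) :
    (∫ x in Ioi (0:ℝ),
        (β/α - 2 * β * α ^ (β - 1) / (α ^ β + x ^ β)) ^ 2
          * (β * α ^ β * x ^ (β - 1) / (x ^ β + α ^ β) ^ 2))
      = β ^ 2 / (3 * α ^ 2) := by
  have hα' : α ≠ 0 := hα.ne'
  set A := α ^ β with hA
  have hApos : 0 < A := Real.rpow_pos_of_pos hα β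
  set g : ℝ → ℝ :=
    fun y => (β/α - 2 * β * α ^ (β-1) / (A + y)) ^ 2 * (A / (y + A) ^ 2) with hg
  have key : (∫ x in Ioi (0:ℝ), (|β| * x ^ (β - 1)) • g (x ^ β)) = ∫ y in Ioi (0:ℝ), g y :=
    integral_comp_rpow_Ioi g hβ.ne'
  have step1 : (∫ x in Ioi (0:ℝ),
        (β/α - 2 * β * α ^ (β - 1) / (α ^ β + x ^ β)) ^ 2
          * (β * α ^ β * x ^ (β - 1) / (x ^ β + α ^ β) ^ 2))
      = ∫ y in Ioi (0:ℝ), g y := by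
    rw [← key]
    congr 1
    ext x
    simp only [smul_eq_mul, hg, abs_of_pos hβ, ← hA]
    ring
  rw [step1]
  -- antiderivative
  set F : ℝ → ℝ := fun y => (β/α) ^ 2 / 6 * ((y - A) / (y + A)) ^ 3 with hF
  have hab : 2 * β * α ^ (β - 1) = 2 * (β / α) * A := by
    rw [hA, Real.rpow_sub hα, Real.rpow_one]
    field_simp
  have hderiv : ∀ y ∈ Ici (0:ℝ), HasDerivAt F (g y) y := by
    intro y hy
    have hyA : y + A ≠ 0 := by
      have : (0:ℝ) ≤ y := hy
      positivity
    have hu : HasDerivAt (fun y : ℝ => (y - A) / (y + A))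
        ((1 * (y + A) - (y - A) * 1) / (y + A) ^ 2) y :=
      ((hasDerivAt_id y).sub_const A).div ((hasDerivAt_id y).add_const A) hyA
    have h1 : HasDerivAt F ((β/α) ^ 2 / 6 *
        (3 * ((y - A) / (y + A)) ^ 2 * ((1 * (y + A) - (y - A) * 1) / (y + A) ^ 2))) y := by
      simpa using ((hu.pow 3).const_mul ((β/α) ^ 2 / 6))
    have hyA' : A + y ≠ 0 := by rw [add_comm]; exact hyA
    convert h1 using 1
    rw [hg, hab]
    field_simp [hyA, hyA', hα']
    ring
  have hpos : ∀ y ∈ Ioi (0:ℝ), 0 ≤ g y := by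
    intro y hy
    have hy' : (0:ℝ) < y := hy
    have : 0 < A / (y + A) ^ 2 := by positivity
    exact mul_nonneg (sq_nonneg _) this.le
  have hlim : Tendsto F atTop (𝓝 ((β/α) ^ 2 / 6)) := by
    have h0 : Tendsto (fun y : ℝ => (y - A) / (y + A)) atTop (𝓝 1) := by
      have h1 : Tendsto (fun y : ℝ => 1 - 2 * A / (y + A)) atTop (𝓝 (1 - 0)) := by
        exact tendsto_const_nhds.sub
          (Tendsto.div_atTop tendsto_const_nhds (tendsto_atTop_add_const_right _ A tendsto_id))
      rw [sub_zero] at h1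
      apply h1.congr'
      filter_upwards [eventually_gt_atTop (0:ℝ)] with y hy
      have hyA : y + A ≠ 0 := by positivity
      field_simp
      ring
    have := (h0.pow 3).const_mul ((β/α) ^ 2 / 6)
    simpa using this
  have := integral_Ioi_of_hasDerivAt_of_nonneg' hderiv hpos hlim
  have hF0 : F 0 = -((β/α) ^ 2 / 6) := by
    have h : ((0:ℝ) - A) / (0 + A) = -1 := by
      rw [zero_sub, zero_add, neg_div, div_self hApos.ne']
    simp only [hF]
    rw [h]; ring
  rw [this, hF0]
  field_simp
  ring
end

section
/- For integers 1 ≤ i ≤ n, the quantity J^{(i)}_0(α) := ∫₀^∞ (∂ log f^{(i)}_{α,β}(x)/∂α)² f^{(i)}_{α,β}(x) dx equals (β/α)² · i(n−i+1)/(n+2). -/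
/-!
Substituting `x = α (u / (1 - u)) ^ (1 / β)`, the log-logistic quantile of `u`, turns
`f^{(i)}_{α,β}(x) dx` into `c(i,n) u^(i-1) (1-u)^(n-i) du`, the law of the `i`-th order statistic
of a uniform sample, and the score into `(β / α) ((n + 1) u - i)`. Hence `J^{(i)}_0(α)` is
`(β / α)² (n + 1)²` times the variance of `Beta(i, n - i + 1)`, which is
`i (n - i + 1) / ((n + 1)² (n + 2))`; the moments come from
`∫₀¹ u^k (1-u)^m du = k! m! / (k + m + 1)!`.
-/

open MeasureTheory Set

/-- The score of the `i`-th order statistic density with respect to `α`. -/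
noncomputable def scoreAlpha (α β : ℝ) (n i : ℕ) (x : ℝ) : ℝ :=
  β * ((n : ℝ) - i + 1) / α - ((n : ℝ) + 1) * β * α ^ (β - 1) / (α ^ β + x ^ β)

open scoped Nat

theorem integral_pow_mul_one_sub_pow (k m : ℕ) :
    ∫ u in (0:ℝ)..1, u ^ k * (1 - u) ^ m = k ! * m ! / (k + m + 1)! := by
  have h := Complex.betaIntegral_eq_Gamma_mul_div (k + 1) (m + 1)
    (by simp; positivity) (by simp; positivity)
  rw [show (k : ℂ) + 1 + (m + 1) = ↑(k + m + 1) + 1 by push_cast; ring] at h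
  simp only [Complex.betaIntegral, add_sub_cancel_right, Complex.Gamma_nat_eq_factorial] at h
  norm_cast at h
  rw [intervalIntegral.integral_ofReal] at h
  apply Complex.ofReal_injective
  rw [h]
  push_cast
  ring

noncomputable def logLogisticQuantile (α β u : ℝ) : ℝ := α * (u / (1 - u)) ^ β⁻¹

noncomputable def uniformOrderDensity (n i : ℕ) (u : ℝ) : ℝ :=
  cCoef i n * u ^ (i - 1) * (1 - u) ^ (n - i)

section LogLogisticQuantile

variable {α β u : ℝ}

lemma logLogisticQuantile_pos (hα : 0 < α) (hu : u ∈ Ioo 0 1) :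
    0 < logLogisticQuantile α β u :=
  mul_pos hα (Real.rpow_pos_of_pos (div_pos hu.1 (by linarith [hu.2])) _)

lemma logLogisticQuantile_div_rpow (hα : α ≠ 0) (hβ : β ≠ 0) (hu : u ∈ Ioo 0 1) :
    (logLogisticQuantile α β u / α) ^ β = u / (1 - u) := by
  have hodds : 0 ≤ u / (1 - u) := div_nonneg hu.1.le (by linarith [hu.2])
  rw [logLogisticQuantile, mul_div_cancel_left₀ _ hα, ← Real.rpow_mul hodds,
    inv_mul_cancel₀ hβ, Real.rpow_one]

lemma strictMonoOn_logLogisticQuantile (hα : 0 < α) (hβ : 0 < β) :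
    StrictMonoOn (logLogisticQuantile α β) (Ioo 0 1) := by
  rintro u ⟨hu0, hu1⟩ v ⟨hv0, hv1⟩ huv
  have hodds : u / (1 - u) < v / (1 - v) := by
    rw [div_lt_div_iff₀ (by linarith) (by linarith)]
    nlinarith
  exact mul_lt_mul_of_pos_left
    (Real.rpow_lt_rpow (div_nonneg hu0.le (by linarith)) hodds (inv_pos.2 hβ)) hα

lemma image_logLogisticQuantile_Ioo (hα : 0 < α) (hβ : 0 < β) :
    logLogisticQuantile α β '' Ioo 0 1 = Ioi 0 := by
  refine Subset.antisymm ?_ fun y (hy : 0 < y) => ?_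
  · rintro _ ⟨u, hu, rfl⟩
    exact logLogisticQuantile_pos hα hu
  · set t := (y / α) ^ β
    have ht : 0 < t := Real.rpow_pos_of_pos (div_pos hy hα) _
    refine ⟨t / (1 + t), ⟨by positivity, by rw [div_lt_one (by positivity)]; linarith⟩, ?_⟩
    have hodds : t / (1 + t) / (1 - t / (1 + t)) = t := by field_simp; ring
    rw [logLogisticQuantile, hodds, ← Real.rpow_mul (div_pos hy hα).le,
      mul_inv_cancel₀ hβ.ne', Real.rpow_one, mul_div_cancel₀ _ hα.ne']

-- `(log Q)' = (1 / β) (1 / u + 1 / (1 - u))`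
lemma hasDerivAt_logLogisticQuantile (hu : u ∈ Ioo 0 1) :
    HasDerivAt (logLogisticQuantile α β)
      (logLogisticQuantile α β u / (β * u * (1 - u))) u := by
  obtain ⟨hu0, hu1⟩ := hu
  have h1u : 1 - u ≠ 0 := by linarith
  have hodds : HasDerivAt (fun u : ℝ => u / (1 - u)) (1 / (1 - u) ^ 2) u :=
    ((hasDerivAt_id u).div ((hasDerivAt_const u 1).sub (hasDerivAt_id u)) h1u).congr_deriv
      (by simp only [Pi.sub_apply, id]; field_simp; ring)
  have hpos : 0 < u / (1 - u) := div_pos hu0 (by linarith)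
  have hQ := ((Real.hasDerivAt_rpow_const (p := β⁻¹) (Or.inl hpos.ne')).comp u hodds).const_mul α
  refine hQ.congr_deriv ?_
  rw [logLogisticQuantile, Real.rpow_sub_one hpos.ne']
  field_simp

lemma scoreAlpha_logLogisticQuantile (n i : ℕ) (hα : 0 < α) (hβ : β ≠ 0)
    (hu : u ∈ Ioo 0 1) :
    scoreAlpha α β n i (logLogisticQuantile α β u) = β / α * ((n + 1) * u - i) := by
  have h1u : 1 - u ≠ 0 := by linarith [hu.2]
  have hQ : logLogisticQuantile α β u ^ β = α ^ β * (u / (1 - u)) := by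
    rw [← logLogisticQuantile_div_rpow hα.ne' hβ hu, ← Real.mul_rpow hα.le
      (div_pos (logLogisticQuantile_pos hα hu) hα).le, mul_div_cancel₀ _ hα.ne']
  rw [scoreAlpha, hQ, Real.rpow_sub_one hα.ne']
  field_simp
  ring

lemma deriv_mul_fOrd_logLogisticQuantile {n i : ℕ} (hi : 1 ≤ i) (hin : i ≤ n) (hα : 0 < α)
    (hβ : 0 < β) (hu : u ∈ Ioo 0 1) :
    logLogisticQuantile α β u / (β * u * (1 - u)) *
      fOrd α β n i (logLogisticQuantile α β u) = uniformOrderDensity n i u := by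
  have hu0 : u ≠ 0 := hu.1.ne'
  have h1u : 1 - u ≠ 0 := by linarith [hu.2]
  have hodds := logLogisticQuantile_div_rpow hα.ne' hβ.ne' hu
  set s := logLogisticQuantile α β u / α
  have hs : 0 < s := div_pos (logLogisticQuantile_pos hα hu) hα
  have hsi : s ^ ((i : ℝ) * β - 1) = (u / (1 - u)) ^ i / s := by
    rw [Real.rpow_sub_one hs.ne', mul_comm, Real.rpow_mul hs.le, hodds, Real.rpow_natCast]
  have hsum : 1 + u / (1 - u) = (1 - u)⁻¹ := by field_simp; ring
  obtain ⟨j, rfl⟩ : ∃ j, i = j + 1 := ⟨i - 1, by omega⟩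
  obtain ⟨k, rfl⟩ : ∃ k, n = j + 1 + k := ⟨n - (j + 1), by omega⟩
  rw [show logLogisticQuantile α β u = α * s by simp only [s]; field_simp, fOrd,
    mul_div_cancel_left₀ _ hα.ne', hsi, hodds, hsum, uniformOrderDensity,
    show j + 1 + k - (j + 1) = k by omega, Nat.add_sub_cancel, inv_pow, div_pow]
  field_simp
  ring

end LogLogisticQuantile

theorem integral_mul_fOrd_eq_integral_uniformOrderDensity {α β : ℝ} {n i : ℕ} (hi : 1 ≤ i)
    (hin : i ≤ n) (hα : 0 < α) (hβ : 0 < β) (g : ℝ → ℝ) :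
    ∫ x in Ioi 0, g x * fOrd α β n i x =
      ∫ u in Ioo 0 1, g (logLogisticQuantile α β u) * uniformOrderDensity n i u := by
  rw [← image_logLogisticQuantile_Ioo hα hβ, integral_image_eq_integral_abs_deriv_smul
    measurableSet_Ioo (fun u hu => (hasDerivAt_logLogisticQuantile hu).hasDerivWithinAt)
    (strictMonoOn_logLogisticQuantile hα hβ).injOn]
  refine setIntegral_congr_fun measurableSet_Ioo fun u hu => ?_
  have hpos : 0 < logLogisticQuantile α β u / (β * u * (1 - u)) :=
    div_pos (logLogisticQuantile_pos hα hu) (mul_pos (mul_pos hβ hu.1) (sub_pos.2 hu.2))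
  rw [abs_of_pos hpos, smul_eq_mul, ← deriv_mul_fOrd_logLogisticQuantile hi hin hα hβ hu]
  ring

section UniformOrderStatistic

variable {n i : ℕ}

lemma integral_pow_mul_uniformOrderDensity (hi : 1 ≤ i) (hin : i ≤ n) (r : ℕ) :
    ∫ u in Ioo 0 1, u ^ r * uniformOrderDensity n i u =
      n ! * (i - 1 + r)! / ((i - 1)! * (n + r)!) := by
  have hrw : ∀ u : ℝ, u ^ r * uniformOrderDensity n i u =
      cCoef i n * (u ^ (i - 1 + r) * (1 - u) ^ (n - i)) := fun u => by
    rw [uniformOrderDensity, pow_add]; ring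
  simp_rw [hrw]
  rw [integral_const_mul, ← integral_Ioc_eq_integral_Ioo,
    ← intervalIntegral.integral_of_le zero_le_one, integral_pow_mul_one_sub_pow, cCoef,
    show i - 1 + r + (n - i) + 1 = n + r by omega]
  have : ((n - i)! : ℝ) ≠ 0 := by positivity
  field_simp

lemma integrableOn_pow_mul_uniformOrderDensity (r : ℕ) :
    IntegrableOn (fun u => u ^ r * uniformOrderDensity n i u) (Ioo 0 1) := by
  refine (Continuous.integrableOn_Icc ?_).mono_set Ioo_subset_Icc_self
  unfold uniformOrderDensity
  fun_prop

lemma integral_sq_mul_uniformOrderDensity (hi : 1 ≤ i) (hin : i ≤ n) :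
    ∫ u in Ioo 0 1, (((n : ℝ) + 1) * u - i) ^ 2 * uniformOrderDensity n i u =
      i * ((n : ℝ) - i + 1) / ((n : ℝ) + 2) := by
  set M : ℕ → ℝ := fun r => ∫ u in Ioo 0 1, u ^ r * uniformOrderDensity n i u
  have hI := integrableOn_pow_mul_uniformOrderDensity (n := n) (i := i)
  calc ∫ u in Ioo 0 1, (((n : ℝ) + 1) * u - i) ^ 2 * uniformOrderDensity n i u
      = ∫ u in Ioo 0 1, (((n : ℝ) + 1) ^ 2 * (u ^ 2 * uniformOrderDensity n i u)
          - 2 * i * (n + 1) * (u ^ 1 * uniformOrderDensity n i u)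
          + i ^ 2 * (u ^ 0 * uniformOrderDensity n i u)) := by
        congr 1; ext u; ring
    _ = ((n : ℝ) + 1) ^ 2 * M 2 - 2 * i * (n + 1) * M 1 + i ^ 2 * M 0 := by
        rw [integral_add (((hI 2).const_mul _).sub' ((hI 1).const_mul _)) ((hI 0).const_mul _),
          integral_sub ((hI 2).const_mul _) ((hI 1).const_mul _),
          integral_const_mul, integral_const_mul, integral_const_mul]
    _ = i * ((n : ℝ) - i + 1) / ((n : ℝ) + 2) := by
        simp only [M, integral_pow_mul_uniformOrderDensity hi hin]
        obtain ⟨j, rfl⟩ : ∃ j, i = j + 1 := ⟨i - 1, by omega⟩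
        simp only [Nat.add_sub_cancel, add_zero, Nat.factorial_succ]
        push_cast
        field_simp
        ring

end UniformOrderStatistic

theorem J_zero_alpha (α β : ℝ) (hα : 0 < α) (hβ : 0 < β)
    (n i : ℕ) (hi1 : 1 ≤ i) (hin : i ≤ n) :
    (∫ x in Ioi (0:ℝ), (scoreAlpha α β n i x) ^ 2 * fOrd α β n i x)
      = (β/α) ^ 2 * ((i : ℝ) * ((n : ℝ) - i + 1) / ((n : ℝ) + 2)) := by
  rw [integral_mul_fOrd_eq_integral_uniformOrderDensity hi1 hin hα hβ,
    ← integral_sq_mul_uniformOrderDensity hi1 hin, ← integral_const_mul]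
  refine setIntegral_congr_fun measurableSet_Ioo fun u hu => ?_
  rw [scoreAlpha_logLogisticQuantile n i hα hβ.ne' hu]
  ring
end

section
/- Summing the τ = 0 cross-term over i: for all positive integers n and α, β > 0, ∑_{i=1}^{n} (1/α) · (1/(n+2)) · [ n − 2i + 1 − i(n−i+1)(Ψ(i) − Ψ(n−i+1)) ] = 0. -/
open Finset

theorem Finset.sum_Icc_one_reflect {M : Type*} [AddCommMonoid M] (f : ℕ → M) (n : ℕ) :
    ∑ i ∈ Icc 1 n, f (n + 1 - i) = ∑ i ∈ Icc 1 n, f i := by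
  rw [← Ico_add_one_right_eq_Icc, sum_Ico_reflect f 1 (Nat.le_succ _)]
  simp

theorem Finset.sum_Icc_one_eq_zero_of_reflect_eq_neg {G : Type*} [AddCommGroup G]
    [IsAddTorsionFree G] {f : ℕ → G} {n : ℕ} (hf : ∀ i ∈ Icc 1 n, f (n + 1 - i) = -f i) :
    ∑ i ∈ Icc 1 n, f i = 0 := by
  rw [← self_eq_neg, ← sum_neg_distrib, ← sum_congr rfl hf, sum_Icc_one_reflect]

noncomputable def crossTerm (ψ : ℝ → ℝ) (n x : ℝ) : ℝ :=
  n - 2 * x + 1 - x * (n - x + 1) * (ψ x - ψ (n - x + 1))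

theorem crossTerm_reflect (ψ : ℝ → ℝ) (n x : ℝ) :
    crossTerm ψ n (n + 1 - x) = -crossTerm ψ n x := by
  rw [crossTerm, crossTerm, show n - (n + 1 - x) + 1 = x by ring,
    show n + 1 - x = n - x + 1 by ring]
  ring

theorem sum_cross_term_zero_general (n : ℕ) (α : ℝ) :
    ∑ i ∈ Finset.Icc 1 n,
      (1/α) * (1/((n : ℝ) + 2)) *
        ((n : ℝ) - 2 * i + 1
          - (i : ℝ) * ((n : ℝ) - i + 1) * (digamma i - digamma ((n : ℝ) - i + 1))) = 0 := by
  rw [← mul_sum]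
  refine mul_eq_zero_of_right _ (sum_Icc_one_eq_zero_of_reflect_eq_neg (f := fun i : ℕ ↦
    crossTerm digamma n i) fun i hi ↦ ?_)
  rw [Nat.cast_sub (by grind), Nat.cast_add, Nat.cast_one]
  exact crossTerm_reflect digamma n i

theorem sum_cross_term_zero (n : ℕ) (hn : 0 < n) (α β : ℝ) (hα : 0 < α) (hβ : 0 < β) :
    ∑ i ∈ Finset.Icc 1 n,
      (1/α) * (1/((n : ℝ) + 2)) *
        ((n : ℝ) - 2 * i + 1
          - (i : ℝ) * ((n : ℝ) - i + 1) * (digamma i - digamma ((n : ℝ) - i + 1))) = 0 :=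
  sum_cross_term_zero_general n α
end
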